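/- Let m be a nonzero integer, set ε = −1 if m > 0 and ε = 1 if m < 0, and define Δ_m : ℝ_{>0} → ℝ by Δ_m(t) = t^{|m|+1} − t^{|m|} − t + 3 − t^{−1} − t^{−|m|} + t^{−|m|−1}. Then (ε/2) · Δ_m''(1) = −2m. (This is the value of the Casson invariant λ(∂A(m,n)) computed via the surgery formula; in particular it is nonzero for m ≠ 0 and takes distinct values for distinct m.) -/

import Mathlib

/-- The Alexander polynomial of the ribbon knot `K_{(m,n)}` presenting
`∂A(m,n)`, viewed as the explicit real function
`t ↦ t^(|m|+1) − t^|m| − t + 3 − t⁻¹ − t^(−|m|) + t^(−|m|−1)`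
with integer-power exponents. -/
noncomputable def DeltaA (m : ℤ) : ℝ → ℝ :=
  fun t => t ^ (|m| + 1) - t ^ |m| - t + 3 - t⁻¹ - t ^ (-|m|) + t ^ (-|m| - 1)

/-- With `ε = −1` if `m > 0` and `ε = 1` if `m < 0`, the Casson invariant
`λ(∂A(m,n)) = (ε/2)·Δ_m''(1)` equals `−2m`. -/
theorem casson_boundary_A (m : ℤ) (hm : m ≠ 0) :
    let ε : ℝ := if 0 < m then -1 else 1
    ε / 2 * iteratedDeriv 2 (DeltaA m) 1 = ((-2 * m : ℤ) : ℝ) := by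
  intro ε
  set a := |m| with ha
  -- rewrite DeltaA entirely with zpow
  have fe : DeltaA m = fun t : ℝ =>
      t ^ (a + 1) - t ^ a - t ^ (1 : ℤ) + 3 - t ^ (-1 : ℤ) - t ^ (-a) + t ^ (-a - 1) := by
    funext t
    simp [DeltaA, zpow_one, ← ha]
  -- the first derivative, away from 0
  set g : ℝ → ℝ := fun t =>
      ((a : ℝ) + 1) * t ^ a - (a : ℝ) * t ^ (a - 1) - 1 * t ^ (0 : ℤ)
        - (-1 : ℝ) * t ^ (-2 : ℤ) - (-(a : ℝ)) * t ^ (-a - 1)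
        + (-(a : ℝ) - 1) * t ^ (-a - 2) with hg
  have key : ∀ t : ℝ, t ≠ 0 → HasDerivAt (DeltaA m) (g t) t := by
    intro t ht
    rw [fe]
    have h :=
      ((((((hasDerivAt_zpow (a + 1) t (Or.inl ht)).sub
        (hasDerivAt_zpow a t (Or.inl ht))).sub
        (hasDerivAt_zpow 1 t (Or.inl ht))).add_const 3).sub
        (hasDerivAt_zpow (-1) t (Or.inl ht))).sub
        (hasDerivAt_zpow (-a) t (Or.inl ht))).add
        (hasDerivAt_zpow (-a - 1) t (Or.inl ht))
    convert h using 1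
    · rfl
    · rfl
    · rfl
    have e1 : a + 1 - 1 = a := by ring
    have e2 : (1 : ℤ) - 1 = 0 := by ring
    have e3 : (-1 : ℤ) - 1 = -2 := by ring
    have e4 : -a - 1 - 1 = -a - 2 := by ring
    rw [hg]
    simp only [e1, e2, e3, e4]
    push_cast
    ring
  -- the second derivative at 1
  have heq : deriv (DeltaA m) =ᶠ[nhds (1 : ℝ)] g := by
    filter_upwards [eventually_ne_nhds (one_ne_zero)] with t ht
    exact (key t ht).deriv
  have hg1 : HasDerivAt g
      (((a : ℝ) + 1) * ((a : ℝ) * 1 ^ (a - 1)) - (a : ℝ) * (((a : ℝ) - 1) * 1 ^ (a - 1 - 1))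
        - 1 * ((0 : ℝ) * 1 ^ ((0 : ℤ) - 1))
        - (-1 : ℝ) * ((-2 : ℝ) * 1 ^ ((-2 : ℤ) - 1))
        - (-(a : ℝ)) * ((-(a : ℝ) - 1) * 1 ^ (-a - 1 - 1))
        + (-(a : ℝ) - 1) * ((-(a : ℝ) - 2) * 1 ^ (-a - 2 - 1))) 1 := by
    have hne : (1 : ℝ) ≠ 0 := one_ne_zero
    have t1 := (hasDerivAt_zpow a 1 (Or.inl hne)).const_mul ((a : ℝ) + 1)
    have t2 := (hasDerivAt_zpow (a - 1) 1 (Or.inl hne)).const_mul ((a : ℝ))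
    have t3 := (hasDerivAt_zpow (0 : ℤ) 1 (Or.inl hne)).const_mul (1 : ℝ)
    have t4 := (hasDerivAt_zpow (-2 : ℤ) 1 (Or.inl hne)).const_mul ((-1 : ℝ))
    have t5 := (hasDerivAt_zpow (-a - 1) 1 (Or.inl hne)).const_mul (-(a : ℝ))
    have t6 := (hasDerivAt_zpow (-a - 2) 1 (Or.inl hne)).const_mul (-(a : ℝ) - 1)
    have h := ((((t1.sub t2).sub t3).sub t4).sub t5).add t6
    convert h using 2
    · rfl
    · rfl
    · rfl
    all_goals (push_cast; ring)
  have h2 : iteratedDeriv 2 (DeltaA m) 1 = 4 * (a : ℝ) := by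
    have e : iteratedDeriv 2 (DeltaA m) 1 = deriv (deriv (DeltaA m)) 1 := by
      simp [iteratedDeriv_succ, iteratedDeriv_one]
    rw [e, heq.deriv_eq, hg1.deriv]
    simp [one_zpow]
    ring
  rw [h2]
  rcases hm.lt_or_gt with h | h
  · have : ¬ (0 < m) := by omega
    simp only [ε, if_neg this]
    rw [ha, abs_of_neg h]
    push_cast
    ring
  · simp only [ε, if_pos h]
    rw [ha, abs_of_pos h]
    push_cast
    ring
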